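/- arXiv:math/0011217 — 5 statements merged into one kernel-verified Lean document; each statement's English description precedes it below -/
import Mathlib

section
/- Let K be a field of characteristic zero, let r ≥ 1, and let e_1 < e_2 < ⋯ < e_r be non-negative integers. Then there exist an integer N ≥ 0 and elements c_0, c_1, …, c_N of the r-th exterior power ⋀^r_K K[X] of the polynomial ring, with c_N ≠ 0, such that for every t ∈ K one has (X+t)^{e_1} ∧ (X+t)^{e_2} ∧ ⋯ ∧ (X+t)^{e_r} = Σ_{k=0}^{N} c_k t^k, and moreover the leading coefficient c_N is a nonzero scalar multiple of 1 ∧ X ∧ X^2 ∧ ⋯ ∧ X^{r−1}. (In other words, the limit as t → ∞ of the r-dimensional subspace of K[X] spanned by the polynomials (X+t)^{e_i} is the space of polynomials of degree less than r.) -/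
/-!
Expanding each `(X + t) ^ e i` binomially and the wedge product multilinearly, the term
`X ^ p 0 ∧ ⋯ ∧ X ^ p (r-1)` carries the factor `t ^ ∑ (e i - p i)`. It vanishes unless the `p i`
are distinct, and then `∑ p i ≥ 0 + 1 + ⋯ + (r-1)`, with equality exactly when `p` is a
permutation of `0, …, r-1`. So the top power of `t` is `N = ∑ e i - ∑ i`, with coefficient
`det (choose (e i) j) • 1 ∧ X ∧ ⋯ ∧ X ^ (r-1)`. Up to the factor `∏ j !`, this binomial determinant
is the Vandermonde determinant of the distinct `e i`, hence nonzero in characteristic zero.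
-/

open Polynomial Finset
open ExteriorAlgebra (ιMulti)

namespace Finset

theorem sum_range_card_lt_sum_of_ne {s : Finset ℕ} (hs : s ≠ range #s) :
    ∑ n ∈ range #s, n < ∑ x ∈ s, x := by
  set t := range #s
  have hcard : #(t \ s) = #(s \ t) := card_sdiff_comm (card_range _)
  have hgap : (t \ s).Nonempty := by
    rw [nonempty_iff_ne_empty, Ne, sdiff_eq_empty_iff_subset]
    exact fun h => hs (eq_of_subset_of_card_le h (card_range _).ge).symm
  calc ∑ n ∈ t, n = ∑ n ∈ t ∩ s, n + ∑ n ∈ t \ s, n := (sum_inter_add_sum_sdiff t s _).symm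
    _ < ∑ n ∈ s ∩ t, n + #(s \ t) • #s := by
      rw [inter_comm, ← hcard, smul_eq_mul, ← sum_const_nat (fun _ _ => rfl)]
      gcongr with n hn
      exact mem_range.1 (mem_sdiff.1 hn).1
    _ ≤ ∑ n ∈ s ∩ t, n + ∑ n ∈ s \ t, n := by
      gcongr
      exact card_nsmul_le_sum _ _ _ fun n hn => by simpa [t] using (mem_sdiff.1 hn).2
    _ = ∑ x ∈ s, x := sum_inter_add_sum_sdiff s t _

theorem sum_range_card_le_sum (s : Finset ℕ) : ∑ n ∈ range #s, n ≤ ∑ x ∈ s, x := by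
  rcases eq_or_ne s (range #s) with hs | hs
  · exact (congrArg (∑ x ∈ ·, x) hs).ge
  · exact (sum_range_card_lt_sum_of_ne hs).le

end Finset

namespace Fin

variable {r : ℕ} {p : Fin r → ℕ}

theorem sum_val_le_sum_of_injective (hp : Function.Injective p) :
    ∑ i : Fin r, (i : ℕ) ≤ ∑ i, p i := by
  classical
  have := sum_range_card_le_sum (univ.image p)
  rwa [card_image_of_injective _ hp, card_univ, Fintype.card_fin,
    sum_image fun _ _ _ _ h => hp h, ← Fin.sum_univ_eq_sum_range] at this

theorem lt_of_injective_of_sum_le (hp : Function.Injective p)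
    (hsum : ∑ i, p i ≤ ∑ i : Fin r, (i : ℕ)) (i : Fin r) : p i < r := by
  classical
  have hrange : univ.image p = range r := by
    by_contra hne
    have := sum_range_card_lt_sum_of_ne (s := univ.image p)
    rw [card_image_of_injective _ hp, card_univ, Fintype.card_fin,
      sum_image fun _ _ _ _ h => hp h, ← Fin.sum_univ_eq_sum_range] at this
    exact (this hne).not_ge hsum
  exact mem_range.1 (hrange ▸ mem_image_of_mem p (mem_univ i))

end Fin

theorem Matrix.det_choose_ne_zero {R : Type*} [CommRing R] [IsDomain R] [CharZero R] {r : ℕ}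
    {e : Fin r → ℕ} (he : Function.Injective e) :
    (Matrix.of fun i j : Fin r => ((e i).choose j : R)).det ≠ 0 := by
  have hV : (Matrix.vandermonde fun i => (e i : R)).det ≠ 0 :=
    Matrix.det_vandermonde_ne_zero_iff.2 (Nat.cast_injective.comp he)
  rw [Matrix.det_eval_matrixOfPolynomials_eq_det_vandermonde _ (fun j => descPochhammer R j)
    (fun j => descPochhammer_natDegree R j) (fun j => monic_descPochhammer R j)] at hV
  simp only [descPochhammer_eval_eq_descFactorial, Nat.descFactorial_eq_factorial_mul_choose,
    Nat.cast_mul] at hV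
  exact right_ne_zero_of_mul (Matrix.det_mul_row (fun j : Fin r => ((j : ℕ).factorial : R))
    (Matrix.of fun i j : Fin r => ((e i).choose j : R)) ▸ hV)

theorem ExteriorAlgebra.ιMulti_X_pow_ne_zero (R : Type*) [CommRing R] [Nontrivial R] (r : ℕ) :
    ιMulti R r (fun i : Fin r => (X : R[X]) ^ (i : ℕ)) ≠ 0 := by
  have hpair := exteriorPower.pairingDual_apply_apply_eq_one (fun n => (X : R[X]) ^ n)
    (fun n => lcoeff R n) (by simp) (fun _ _ h => by simp [coeff_X_pow, h]) r
    (Fin.valOrderEmb r)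
  intro h
  have h0 : exteriorPower.ιMulti R r ((fun n => (X : R[X]) ^ n) ∘ Fin.valOrderEmb r) = 0 :=
    Subtype.ext h
  rw [h0, map_zero] at hpair
  exact zero_ne_one hpair

theorem MultilinearMap.map_sum_smul_finset {R ι κ M N : Type*} [CommSemiring R] [AddCommMonoid M]
    [AddCommMonoid N] [Module R M] [Module R N] [DecidableEq ι] [Fintype ι]
    (f : MultilinearMap R (fun _ : ι => M) N) (s : ι → Finset κ) (a : ι → κ → R) (v : κ → M) :
    f (fun i => ∑ j ∈ s i, a i j • v j) =
      ∑ p ∈ Fintype.piFinset s, (∏ i, a i (p i)) • f (v ∘ p) := by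
  rw [f.map_sum_finset]
  exact sum_congr rfl fun p _ => f.map_smul_univ _ _

theorem Polynomial.X_add_C_pow_eq_sum {R : Type*} [CommSemiring R] (t : R) (n : ℕ) :
    (X + C t) ^ n = ∑ j ∈ Iic n, ((n.choose j : R) * t ^ (n - j)) • (X : R[X]) ^ j := by
  rw [add_pow, Nat.range_succ_eq_Iic]
  refine sum_congr rfl fun j _ => ?_
  rw [smul_eq_C_mul, C_mul, C_pow, ← map_natCast C]
  ring

namespace ShiftedPowers

variable {R : Type*} [CommRing R] {r : ℕ} (e : Fin r → ℕ)

/-- Exponent of `t` in the term of the expansion of `⋀ᵢ (X + t) ^ e i` indexed by `p`. -/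
def tDegree (p : Fin r → ℕ) : ℕ := ∑ i, (e i - p i)

def topDegree : ℕ := ∑ i, e i - ∑ i : Fin r, (i : ℕ)

variable (R) in
noncomputable def wedgeCoeff (k : ℕ) : ExteriorAlgebra R R[X] :=
  ∑ p ∈ Iic e with tDegree e p = k,
    (∏ i, ((e i).choose (p i) : R)) • ιMulti R r (fun i => (X : R[X]) ^ p i)

theorem ιMulti_X_add_C_pow (t : R) :
    ιMulti R r (fun i => (X + C t) ^ e i) =
      ∑ p ∈ Iic e, t ^ tDegree e p • (∏ i, ((e i).choose (p i) : R)) •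
        ιMulti R r (fun i => (X : R[X]) ^ p i) := by
  simp_rw [X_add_C_pow_eq_sum]
  refine ((ιMulti R r).toMultilinearMap.map_sum_smul_finset _ _ _).trans
    (sum_congr rfl fun p _ => ?_)
  rw [prod_mul_distrib, prod_pow_eq_pow_sum, mul_comm, mul_smul]
  rfl

theorem injective_of_ιMulti_X_pow_ne_zero {p : Fin r → ℕ}
    (h : ιMulti R r (fun i => (X : R[X]) ^ p i) ≠ 0) : Function.Injective p := by
  by_contra hp
  exact h (ExteriorAlgebra.ιMulti_eq_zero_of_not_inj fun hv => hp hv.of_comp)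

variable {e}

theorem tDegree_eq {p : Fin r → ℕ} (hp : p ≤ e) : tDegree e p = ∑ i, e i - ∑ i, p i :=
  sum_tsub_distrib _ fun i _ => hp i

theorem tDegree_le_topDegree {p : Fin r → ℕ} (hp : p ≤ e)
    (hinj : Function.Injective p) : tDegree e p ≤ topDegree e := by
  rw [tDegree_eq hp, topDegree]
  exact Nat.sub_le_sub_left (Fin.sum_val_le_sum_of_injective hinj) _

theorem exists_perm_of_tDegree_eq_topDegree {p : Fin r → ℕ}
    (hp : p ≤ e) (hinj : Function.Injective p) (hdeg : tDegree e p = topDegree e) :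
    ∃ σ : Equiv.Perm (Fin r), p = Fin.val ∘ σ := by
  have hle : ∑ i, p i ≤ ∑ i, e i := sum_le_sum fun i _ => hp i
  have hsum : ∑ i, p i ≤ ∑ i : Fin r, (i : ℕ) := by
    have := Fin.sum_val_le_sum_of_injective hinj
    rw [tDegree_eq hp, topDegree] at hdeg
    omega
  have hlt := Fin.lt_of_injective_of_sum_le hinj hsum
  have hbij : Function.Bijective fun i => (⟨p i, hlt i⟩ : Fin r) :=
    Finite.injective_iff_bijective.1 fun i j h => hinj (congrArg Fin.val h)
  exact ⟨Equiv.ofBijective _ hbij, rfl⟩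

theorem tDegree_perm {σ : Equiv.Perm (Fin r)} (hσ : Fin.val ∘ σ ≤ e) :
    tDegree e (Fin.val ∘ σ) = topDegree e := by
  rw [tDegree_eq hσ, Function.comp_def, Equiv.sum_comp σ (fun i => (i : ℕ)), topDegree]

theorem ιMulti_X_add_C_pow_eq_sum_wedgeCoeff (t : R) :
    ιMulti R r (fun i => (X + C t) ^ e i) =
      ∑ k ∈ range (topDegree e + 1), t ^ k • wedgeCoeff R e k := by
  have hfiber : ∀ k, t ^ k • wedgeCoeff R e k =
      ∑ p ∈ Iic e with tDegree e p = k,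
        t ^ tDegree e p • (∏ i, ((e i).choose (p i) : R)) •
          ιMulti R r (fun i => (X : R[X]) ^ p i) := fun k => by
    rw [wedgeCoeff, smul_sum]
    exact sum_congr rfl fun p hp => by rw [(mem_filter.1 hp).2]
  rw [sum_congr rfl fun k _ => hfiber k, sum_fiberwise_eq_sum_filter, ιMulti_X_add_C_pow]
  refine (sum_filter_of_ne fun p hp hne => ?_).symm
  have hinj := injective_of_ιMulti_X_pow_ne_zero (right_ne_zero_of_smul (right_ne_zero_of_smul hne))
  exact mem_range.2 (Nat.lt_succ_of_le (tDegree_le_topDegree (mem_Iic.1 hp) hinj))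

theorem wedgeCoeff_topDegree_eq_sum_perm :
    wedgeCoeff R e (topDegree e) = ∑ σ : Equiv.Perm (Fin r),
      (∏ i, ((e i).choose (σ i) : R)) • ιMulti R r (fun i => (X : R[X]) ^ (σ i : ℕ)) := by
  symm
  refine sum_bij_ne_zero (fun σ _ _ => Fin.val ∘ σ) (fun σ _ hσ => ?_)
    (fun σ₁ _ _ σ₂ _ _ h => Equiv.ext fun i => Fin.ext (congrFun h i))
    (fun p hp hne => ?_) (fun _ _ _ => rfl)
  · have hle : Fin.val ∘ σ ≤ e := fun i => by
      by_contra! h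
      have hzero : (e i).choose (σ i) = 0 := Nat.choose_eq_zero_of_lt h
      exact hσ (by rw [prod_eq_zero (mem_univ i) (by rw [hzero, Nat.cast_zero]), zero_smul])
    exact mem_filter.2 ⟨mem_Iic.2 hle, tDegree_perm hle⟩
  · obtain ⟨hpe, hdeg⟩ := mem_filter.1 hp
    obtain ⟨σ, rfl⟩ := exists_perm_of_tDegree_eq_topDegree (mem_Iic.1 hpe)
      (injective_of_ιMulti_X_pow_ne_zero (right_ne_zero_of_smul hne)) hdeg
    exact ⟨σ, mem_univ _, hne, rfl⟩

theorem wedgeCoeff_topDegree :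
    wedgeCoeff R e (topDegree e) =
      (Matrix.of fun i j : Fin r => ((e i).choose j : R)).det •
        ιMulti R r (fun i : Fin r => (X : R[X]) ^ (i : ℕ)) := by
  rw [wedgeCoeff_topDegree_eq_sum_perm, ← Matrix.det_transpose, Matrix.det_apply', sum_smul]
  refine sum_congr rfl fun σ _ => ?_
  rw [← Function.comp_def (fun i : Fin r => (X : R[X]) ^ (i : ℕ)), AlternatingMap.map_perm,
    Units.smul_def, ← Int.cast_smul_eq_zsmul R, smul_smul, mul_comm]
  rfl

end ShiftedPowers

theorem limit_of_shifted_powers_charZero_general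
    (K : Type*) [Field K] [CharZero K] (r : ℕ)
    (e : Fin r → ℕ) (he : StrictMono e) :
    ∃ (N : ℕ) (c : ℕ → ExteriorAlgebra K (Polynomial K)),
      c N ≠ 0 ∧
      (∀ t : K,
        (List.ofFn fun i : Fin r =>
            ExteriorAlgebra.ι K (((X : K[X]) + C t) ^ (e i))).prod
          = ∑ k ∈ Finset.range (N + 1), t ^ k • c k) ∧
      ∃ u : K, u ≠ 0 ∧
        c N = u • (List.ofFn fun i : Fin r =>
            ExteriorAlgebra.ι K ((X : K[X]) ^ (i : ℕ))).prod := by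
  have hdet := Matrix.det_choose_ne_zero (R := K) he.injective
  refine ⟨ShiftedPowers.topDegree e, ShiftedPowers.wedgeCoeff K e, ?_, fun t => ?_, _, hdet, ?_⟩
  · rw [ShiftedPowers.wedgeCoeff_topDegree]
    exact smul_ne_zero hdet (ExteriorAlgebra.ιMulti_X_pow_ne_zero K r)
  · rw [← ExteriorAlgebra.ιMulti_apply, ShiftedPowers.ιMulti_X_add_C_pow_eq_sum_wedgeCoeff]
  · rw [ShiftedPowers.wedgeCoeff_topDegree, ExteriorAlgebra.ιMulti_apply]

/-- Over a field `K` of characteristic zero, given `r ≥ 1` and strictly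
increasing non-negative integers `e 0 < e 1 < ⋯ < e (r-1)`, the wedge product
`(X+t)^{e 0} ∧ ⋯ ∧ (X+t)^{e (r-1)}` in the exterior algebra of `K[X]` is a polynomial
function of `t` whose (nonzero) leading coefficient is a nonzero scalar multiple of
`1 ∧ X ∧ ⋯ ∧ X^{r-1}`. -/
theorem limit_of_shifted_powers_charZero
    (K : Type*) [Field K] [CharZero K] (r : ℕ) (hr : 1 ≤ r)
    (e : Fin r → ℕ) (he : StrictMono e) :
    ∃ (N : ℕ) (c : ℕ → ExteriorAlgebra K (Polynomial K)),
      c N ≠ 0 ∧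
      (∀ t : K,
        (List.ofFn fun i : Fin r =>
            ExteriorAlgebra.ι K (((X : K[X]) + C t) ^ (e i))).prod
          = ∑ k ∈ Finset.range (N + 1), t ^ k • c k) ∧
      ∃ u : K, u ≠ 0 ∧
        c N = u • (List.ofFn fun i : Fin r =>
            ExteriorAlgebra.ι K ((X : K[X]) ^ (i : ℕ))).prod :=
  limit_of_shifted_powers_charZero_general K r e he
end

section
/- Let K be a field of characteristic zero and let V be an r-dimensional K-linear subspace of the polynomial ring K[X] such that for every f ∈ V and every t ∈ K the polynomial f(X+t) again lies in V. Then V is exactly the space of polynomials of degree strictly less than r. -/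
open Polynomial

private lemma taylor_coeff_high {K : Type*} [Field K] (g : K[X]) {m : ℕ}
    (hm : g.natDegree ≤ m) : (taylor (1 : K) g).coeff m = g.coeff m := by
  rw [taylor_coeff]
  have h1 : (hasseDeriv m g).natDegree < 1 := by
    have := natDegree_hasseDeriv_le g m
    omega
  rw [eval_eq_sum_range' h1]
  simp [hasseDeriv_coeff]

private lemma delta_spec {K : Type*} [Field K] [CharZero K] (g : K[X])
    (hg : 1 ≤ g.natDegree) :
    (taylor (1 : K) g - g) ≠ 0 ∧ (taylor (1 : K) g - g).natDegree = g.natDegree - 1 := by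
  set d := g.natDegree with hd
  have hg0 : g ≠ 0 := by
    intro h
    rw [h] at hd
    simp [natDegree_zero] at hd
    omega
  have hcoeff : (taylor (1 : K) g - g).coeff (d - 1) = (d : K) * g.leadingCoeff := by
    rw [coeff_sub, taylor_coeff]
    have h2 : (hasseDeriv (d - 1) g).natDegree < 2 := by
      have := natDegree_hasseDeriv_le g (d - 1)
      omega
    rw [eval_eq_sum_range' h2]
    rw [Finset.sum_range_succ, Finset.sum_range_succ, Finset.sum_range_zero]
    simp only [hasseDeriv_coeff, pow_zero, mul_one, one_pow, zero_add]
    have e1 : 1 + (d - 1) = d := by omega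
    rw [e1]
    have hch0 : (d - 1).choose (d - 1) = 1 := Nat.choose_self _
    have hch1 : d.choose (d - 1) = d := by
      have h := Nat.choose_symm (show d - 1 ≤ d by omega)
      rw [show d - (d - 1) = 1 by omega, Nat.choose_one_right] at h
      omega
    rw [hch0, hch1]
    have : g.coeff d = g.leadingCoeff := rfl
    rw [this]
    ring
  have hne : (taylor (1 : K) g - g).coeff (d - 1) ≠ 0 := by
    rw [hcoeff]
    apply mul_ne_zero
    · exact Nat.cast_ne_zero.mpr (by omega)
    · exact leadingCoeff_ne_zero.mpr hg0
  constructor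
  · intro h
    rw [h] at hne
    simp at hne
  · apply le_antisymm
    · rw [natDegree_le_iff_coeff_eq_zero]
      intro m hm
      have hdm : d ≤ m := by omega
      rw [coeff_sub, taylor_coeff_high g hdm, sub_self]
    · exact le_natDegree_of_ne_zero hne

private lemma degreeLT_le_of_all_degrees {K : Type*} [Field K] (V : Submodule K K[X]) :
    ∀ n : ℕ, (∀ j < n, ∃ h ∈ V, h ≠ 0 ∧ h.natDegree = j) → degreeLT K n ≤ V := by
  intro n
  induction n with
  | zero =>
    intro _ p hp
    rw [mem_degreeLT] at hp
    have : p.degree = ⊥ := Nat.WithBot.lt_zero_iff.mp (by exact_mod_cast hp)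
    rw [degree_eq_bot] at this
    rw [this]
    exact V.zero_mem
  | succ n ih =>
    intro hall p hp
    obtain ⟨q, hqV, hq0, hqd⟩ := hall n (by omega)
    rw [mem_degreeLT] at hp
    have hlc : q.coeff n ≠ 0 := by
      rw [← hqd]
      exact leadingCoeff_ne_zero.mpr hq0
    set c := p.coeff n / q.coeff n with hc
    have hkey : p - c • q ∈ degreeLT K n := by
      rw [mem_degreeLT]
      rw [degree_lt_iff_coeff_zero]
      intro m hm
      have hnm : n ≤ m := by exact_mod_cast hm
      rw [coeff_sub, coeff_smul, smul_eq_mul]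
      rcases eq_or_lt_of_le hnm with h | h
      · subst h
        rw [hc, div_mul_cancel₀ _ hlc, sub_self]
      · have hp0 : p.coeff m = 0 := by
          apply coeff_eq_zero_of_degree_lt
          calc p.degree < (n + 1 : ℕ) := hp
          _ ≤ (m : WithBot ℕ) := by exact_mod_cast Nat.succ_le_of_lt h
        have hq0' : q.coeff m = 0 := by
          apply coeff_eq_zero_of_natDegree_lt
          omega
        rw [hp0, hq0', mul_zero, sub_zero]
    have : p = (p - c • q) + c • q := by ring
    rw [this]
    exact V.add_mem (ih (fun j hj => hall j (by omega)) hkey) (V.smul_mem c hqV)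

/-- Over a field `K` of characteristic zero, an `r`-dimensional subspace
`V` of `K[X]` which is stable under every substitution `f(X) ↦ f(X+t)` (`t ∈ K`) is exactly
the space of polynomials of degree strictly less than `r`. -/
theorem translation_stable_subspace_eq_degreeLT
    (K : Type*) [Field K] [CharZero K] (r : ℕ)
    (V : Submodule K (Polynomial K)) [FiniteDimensional K V]
    (hdim : Module.finrank K V = r)
    (hstable : ∀ f ∈ V, ∀ t : K, f.comp ((X : K[X]) + C t) ∈ V) :
    V = Polynomial.degreeLT K r := by
  -- every nonzero f ∈ V gives nonzero elements of V of all degrees ≤ natDegree f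
  have hall : ∀ f ∈ V, f ≠ 0 → ∀ j ≤ f.natDegree, ∃ h ∈ V, h ≠ 0 ∧ h.natDegree = j := by
    intro f hfV hf0 j hj
    have key : ∀ i ≤ f.natDegree, ∃ h ∈ V, h ≠ 0 ∧ h.natDegree = f.natDegree - i := by
      intro i
      induction i with
      | zero => intro _; exact ⟨f, hfV, hf0, by omega⟩
      | succ i ih =>
        intro hi
        obtain ⟨h, hhV, hh0, hhd⟩ := ih (by omega)
        have hd1 : 1 ≤ h.natDegree := by omega
        obtain ⟨hne, hdeg⟩ := delta_spec h hd1
        refine ⟨taylor (1 : K) h - h, ?_, hne, by omega⟩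
        have : taylor (1 : K) h ∈ V := by
          rw [taylor_apply]
          exact hstable h hhV 1
        exact V.sub_mem this hhV
    obtain ⟨h, hhV, hh0, hhd⟩ := key (f.natDegree - j) (by omega)
    exact ⟨h, hhV, hh0, by omega⟩
  -- hence V ≤ degreeLT K r
  have hle : V ≤ degreeLT K r := by
    intro f hf
    rw [mem_degreeLT]
    by_cases hf0 : f = 0
    · rw [hf0, degree_zero]
      exact_mod_cast WithBot.bot_lt_coe r
    · have hsub : degreeLT K (f.natDegree + 1) ≤ V :=
        degreeLT_le_of_all_degrees V (f.natDegree + 1)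
          (fun j hj => hall f hf hf0 j (by omega))
      have hfd : Module.finrank K (degreeLT K (f.natDegree + 1)) = f.natDegree + 1 := by
        rw [(degreeLTEquiv K (f.natDegree + 1)).finrank_eq, Module.finrank_fin_fun]
      have hmono := Submodule.finrank_mono hsub
      rw [hfd, hdim] at hmono
      rw [degree_eq_natDegree hf0]
      exact_mod_cast hmono
  -- finally, equality by dimension count
  have hfin : FiniteDimensional K (degreeLT K r) :=
    Module.Finite.equiv (degreeLTEquiv K r).symm
  have hfr : Module.finrank K (degreeLT K r) = r := by
    rw [(degreeLTEquiv K r).finrank_eq, Module.finrank_fin_fun]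
  exact Submodule.eq_of_le_of_finrank_eq hle (by rw [hdim, hfr])
end

section
/- Let K be a field, let n_1, …, n_r and m_1, …, m_k be non-negative integers (r, k ≥ 1), and write N_α = n_1 + ⋯ + n_α (with N_0 = 0) and M_β = m_1 + ⋯ + m_β (with M_0 = 0). Then the product of ideals I(n_1,…,n_r)·I(m_1,…,m_k) in K[x,y] equals the ideal generated by the monomials x^{r+k−i} y^{L_i} for i = 0, 1, …, r+k, where L_i = min over all α + β = i with 0 ≤ α ≤ r and 0 ≤ β ≤ k of N_α + M_β. In particular, this product is again an ideal of the form I(l_1, …, l_{r+k}), with l_i = L_i − L_{i−1}. -/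
open MvPolynomial

/-!
Both factors are spanned by monomials, so the product is spanned by the products of generators,
`x^{(r-α)+(k-β)} y^{N_α+M_β}`. Each of these is a multiple of `x^{r+k-i} y^{L_i}` for
`i = α + β`, and each `x^{r+k-i} y^{L_i}` is itself such a product, taken at a pair `(α, β)`
realising the minimum `L_i`. Since `N` and `M` are monotone, so is `L` on `[0, r+k]`, with
`L_0 = 0`; hence `L_j` is the `j`-th partial sum of its increments `L_{i+1} - L_i`.
-/

/-- The staircase monomial ideal `I(n_1,…,n_r) = (x^r, x^{r-1}y^{n_1}, …, y^{n_1+⋯+n_r})`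
of `K[x,y]`, where `n i` (0-indexed) is `n_{i+1}`:  it is generated by the monomials
`x^{r-j} y^{n_1+⋯+n_j}` for `j = 0, 1, …, r`. -/
noncomputable def stairIdeal (K : Type*) [Field K] (r : ℕ) (n : ℕ → ℕ) :
    Ideal (MvPolynomial (Fin 2) K) :=
  Ideal.span
    ((fun j => (X 0 : MvPolynomial (Fin 2) K) ^ (r - j)
        * (X 1 : MvPolynomial (Fin 2) K) ^ (∑ i ∈ Finset.range j, n i)) '' Set.Iic r)

theorem Nat.add_sum_range_tsub_of_le {f : ℕ → ℕ} {n : ℕ} (hf : ∀ i < n, f i ≤ f (i + 1)) :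
    f 0 + ∑ i ∈ Finset.range n, (f (i + 1) - f i) = f n := by
  induction n with
  | zero => simp
  | succ n ih =>
    rw [Finset.sum_range_succ, ← add_assoc, ih fun i hi => hf i (by omega)]
    exact Nat.add_sub_of_le (hf n n.lt_succ_self)

/-- For `i > r + k` the set is empty, so the value is `sInf ∅ = 0`. -/
noncomputable def minPlusConv (r k : ℕ) (N M : ℕ → ℕ) (i : ℕ) : ℕ :=
  sInf {v | ∃ α β : ℕ, α + β = i ∧ α ≤ r ∧ β ≤ k ∧ v = N α + M β}

section minPlusConv

variable {r k : ℕ} {N M : ℕ → ℕ}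

theorem minPlusConv_le {α β : ℕ} (hα : α ≤ r) (hβ : β ≤ k) :
    minPlusConv r k N M (α + β) ≤ N α + M β :=
  Nat.sInf_le ⟨α, β, rfl, hα, hβ, rfl⟩

theorem exists_minPlusConv_eq {i : ℕ} (hi : i ≤ r + k) :
    ∃ α ≤ r, ∃ β ≤ k, α + β = i ∧ minPlusConv r k N M i = N α + M β := by
  obtain ⟨α, β, hsum, hα, hβ, heq⟩ := Nat.sInf_mem (s :=
    {v | ∃ α β : ℕ, α + β = i ∧ α ≤ r ∧ β ≤ k ∧ v = N α + M β})
    ⟨_, min i r, i - min i r, by omega, by omega, by omega, rfl⟩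
  exact ⟨α, hα, β, hβ, hsum, heq⟩

theorem minPlusConv_zero : minPlusConv r k N M 0 = N 0 + M 0 := by
  obtain ⟨α, -, β, -, hsum, heq⟩ := exists_minPlusConv_eq (r := r) (k := k) (N := N) (M := M)
    (Nat.zero_le _)
  obtain ⟨rfl, rfl⟩ : α = 0 ∧ β = 0 := by omega
  exact heq

theorem minPlusConv_le_succ (hN : Monotone N) (hM : Monotone M) {i : ℕ} (hi : i + 1 ≤ r + k) :
    minPlusConv r k N M i ≤ minPlusConv r k N M (i + 1) := by
  obtain ⟨α, hα, β, hβ, hsum, heq⟩ := exists_minPlusConv_eq (N := N) (M := M) hi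
  rw [heq]
  rcases α with _ | α
  · obtain ⟨β, rfl⟩ : ∃ β', β = β' + 1 := ⟨β - 1, by omega⟩
    calc minPlusConv r k N M i = minPlusConv r k N M (0 + β) := by congr 1; omega
      _ ≤ N 0 + M β := minPlusConv_le hα (by omega)
      _ ≤ N 0 + M (β + 1) := by gcongr; exact hM β.le_succ
  · calc minPlusConv r k N M i = minPlusConv r k N M (α + β) := by congr 1; omega
      _ ≤ N α + M β := minPlusConv_le (by omega) hβ
      _ ≤ N (α + 1) + M β := by gcongr; exact hN α.le_succ

end minPlusConv

section staircase

variable {R : Type*} [CommSemiring R] (x y : R)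

noncomputable def staircase (r : ℕ) (N : ℕ → ℕ) : Ideal R :=
  Ideal.span ((fun j => x ^ (r - j) * y ^ N j) '' Set.Iic r)

variable {x y}

theorem pow_mul_pow_mem_staircase {r : ℕ} {N : ℕ → ℕ} {i a b : ℕ} (hi : i ≤ r)
    (ha : r - i ≤ a) (hb : N i ≤ b) : x ^ a * y ^ b ∈ staircase x y r N := by
  have hgen : x ^ (r - i) * y ^ N i ∈ staircase x y r N :=
    Ideal.subset_span ⟨i, hi, rfl⟩
  convert Ideal.mul_mem_right (x ^ (a - (r - i)) * y ^ (b - N i)) _ hgen using 1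
  rw [← Nat.add_sub_of_le ha, ← Nat.add_sub_of_le hb]
  simp only [pow_add, Nat.add_sub_cancel_left]
  ring

theorem staircase_congr {r : ℕ} {N N' : ℕ → ℕ} (h : ∀ j ≤ r, N j = N' j) :
    staircase x y r N = staircase x y r N' := by
  unfold staircase
  congr 1
  exact Set.image_congr fun j hj => by rw [h j hj]

theorem staircase_mul_staircase {r k : ℕ} {N M L : ℕ → ℕ}
    (hle : ∀ α ≤ r, ∀ β ≤ k, L (α + β) ≤ N α + M β)
    (hex : ∀ i ≤ r + k, ∃ α ≤ r, ∃ β ≤ k, α + β = i ∧ L i = N α + M β) :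
    staircase x y r N * staircase x y k M = staircase x y (r + k) L := by
  rw [staircase, staircase, Ideal.span_mul_span']
  apply le_antisymm
  · rw [Ideal.span_le]
    rintro _ ⟨_, ⟨α, hα, rfl⟩, _, ⟨β, hβ, rfl⟩, rfl⟩
    rw [Set.mem_Iic] at hα hβ
    have hprod : x ^ (r - α) * y ^ N α * (x ^ (k - β) * y ^ M β)
        = x ^ (r - α + (k - β)) * y ^ (N α + M β) := by ring
    change _ * _ ∈ _
    rw [hprod]
    exact pow_mul_pow_mem_staircase (by omega) (by omega) (hle α hα β hβ)
  · rw [staircase, Ideal.span_le]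
    rintro _ ⟨i, hi, rfl⟩
    obtain ⟨α, hα, β, hβ, rfl, heq⟩ := hex i hi
    have hprod : x ^ (r + k - (α + β)) * y ^ L (α + β)
        = x ^ (r - α) * y ^ N α * (x ^ (k - β) * y ^ M β) := by
      rw [heq, show r + k - (α + β) = r - α + (k - β) by omega]
      ring
    change _ * _ ∈ _
    rw [hprod]
    exact Ideal.subset_span (Set.mul_mem_mul ⟨α, hα, rfl⟩ ⟨β, hβ, rfl⟩)

end staircase

theorem stairIdeal_mul_general
    (K : Type*) [Field K] (r k : ℕ) (n m : ℕ → ℕ) :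
    let N : ℕ → ℕ := fun α => ∑ i ∈ Finset.range α, n i
    let M : ℕ → ℕ := fun β => ∑ i ∈ Finset.range β, m i
    let L : ℕ → ℕ := fun i =>
      sInf {v | ∃ α β : ℕ, α + β = i ∧ α ≤ r ∧ β ≤ k ∧ v = N α + M β}
    stairIdeal K r n * stairIdeal K k m =
        Ideal.span
          ((fun i => (X 0 : MvPolynomial (Fin 2) K) ^ (r + k - i)
              * (X 1 : MvPolynomial (Fin 2) K) ^ (L i)) '' Set.Iic (r + k)) ∧
      stairIdeal K r n * stairIdeal K k m
        = stairIdeal K (r + k) (fun i => L (i + 1) - L i) := by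
  intro N M L
  have hN : Monotone N := fun _ _ h => Finset.sum_le_sum_of_subset (Finset.range_mono h)
  have hM : Monotone M := fun _ _ h => Finset.sum_le_sum_of_subset (Finset.range_mono h)
  have hL : L = minPlusConv r k N M := rfl
  have hprod : stairIdeal K r n * stairIdeal K k m = staircase (X 0) (X 1) (r + k) L :=
    staircase_mul_staircase (fun α hα β hβ => hL ▸ minPlusConv_le hα hβ)
      (fun i hi => hL ▸ exists_minPlusConv_eq hi)
  have hL0 : L 0 = 0 := by simp [hL, minPlusConv_zero, N, M]
  refine ⟨hprod, hprod.trans (staircase_congr fun j hj => ?_)⟩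
  rw [← Nat.add_sum_range_tsub_of_le (f := L) fun i hi => minPlusConv_le_succ hN hM (by omega),
    hL0, zero_add]

/-- Writing `N_α = n_1 + ⋯ + n_α` and `M_β = m_1 + ⋯ + m_β`, the product
`I(n_1,…,n_r)·I(m_1,…,m_k)` equals the ideal generated by the monomials
`x^{r+k-i} y^{L_i}` for `i = 0, …, r+k`, where `L_i = min_{α+β=i, α≤r, β≤k} (N_α + M_β)`.
In particular it is again a staircase ideal `I(l_1,…,l_{r+k})` with `l_i = L_i - L_{i-1}`. -/
theorem stairIdeal_mul
    (K : Type*) [Field K] (r k : ℕ) (hr : 1 ≤ r) (hk : 1 ≤ k) (n m : ℕ → ℕ) :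
    let N : ℕ → ℕ := fun α => ∑ i ∈ Finset.range α, n i
    let M : ℕ → ℕ := fun β => ∑ i ∈ Finset.range β, m i
    let L : ℕ → ℕ := fun i =>
      sInf {v | ∃ α β : ℕ, α + β = i ∧ α ≤ r ∧ β ≤ k ∧ v = N α + M β}
    stairIdeal K r n * stairIdeal K k m =
        Ideal.span
          ((fun i => (X 0 : MvPolynomial (Fin 2) K) ^ (r + k - i)
              * (X 1 : MvPolynomial (Fin 2) K) ^ (L i)) '' Set.Iic (r + k)) ∧
      stairIdeal K r n * stairIdeal K k m
        = stairIdeal K (r + k) (fun i => L (i + 1) - L i) :=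
  stairIdeal_mul_general K r k n m
end

section
/- Let K be a field of characteristic zero, let R = K[[x,y]] be the formal power series ring in two variables over K, and let I be a monomial ideal of R of finite colength. Suppose that σ(I) = I for every K-algebra automorphism σ of R. Then I is a power of the maximal ideal: I = (x,y)^d for some non-negative integer d. -/
/-!
Only two automorphisms are needed: the transvections `x ↦ x + y` and `y ↦ y + x`.
Since `I` is monomial, every monomial occurring with nonzero coefficient in an element of `I`
lies in `I`. The transvection `x ↦ x + y` maps `x^a y^b` to `(x + y)^a y^b`, in which every
`x^i y^(a+b-i)` with `i ≤ a` occurs with coefficient `a.choose i`, nonzero in characteristic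
zero; together with `y ↦ y + x`, one monomial of degree `d` in `I` yields all of them, so
`(x, y)^d ≤ I`. Finite colength provides a monomial in `I`; taking `d` minimal, every
generator of `I` has degree at least `d`, so `I ≤ (x, y)^d`.
-/

open scoped Pointwise

namespace MvPowerSeries

variable {σ R : Type*}

section CommSemiring

variable [CommSemiring R]

theorem monomial_one_mem_span_range_X_pow (e : σ →₀ ℕ) :
    monomial e (1 : R) ∈ Ideal.span (Set.range X) ^ e.degree := by
  induction e using Finsupp.induction with
  | zero => simp
  | single_add s n e _ _ ih =>
    rw [← one_mul (1 : R), ← monomial_mul_monomial, ← X_pow_eq, map_add, Finsupp.degree_single,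
      pow_add]
    exact Ideal.mul_mem_mul (Ideal.pow_mem_pow (Ideal.subset_span (Set.mem_range_self s)) n) ih

theorem exists_eq_monomial_of_mem_range_X_pow {d : ℕ} {p : MvPowerSeries σ R}
    (hp : p ∈ Set.range X ^ d) : ∃ e : σ →₀ ℕ, e.degree = d ∧ p = monomial e 1 := by
  induction d generalizing p with
  | zero => exact ⟨0, by simp_all⟩
  | succ d ih =>
    rw [pow_succ] at hp
    obtain ⟨q, hq, _, ⟨s, rfl⟩, rfl⟩ := Set.mem_mul.mp hp
    obtain ⟨e, rfl, rfl⟩ := ih hq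
    exact ⟨e + Finsupp.single s 1, by simp, by rw [X, monomial_mul_monomial, one_mul]⟩

theorem span_range_X_pow_le {I : Ideal (MvPowerSeries σ R)} {d : ℕ}
    (h : ∀ e : σ →₀ ℕ, e.degree = d → monomial e (1 : R) ∈ I) :
    Ideal.span (Set.range X) ^ d ≤ I := by
  rw [Ideal.span, Submodule.span_pow, Submodule.span_le]
  intro p hp
  obtain ⟨e, he, rfl⟩ := exists_eq_monomial_of_mem_range_X_pow hp
  exact h e he

variable (R) in
noncomputable def monomialIdeal (S : Set (σ →₀ ℕ)) : Ideal (MvPowerSeries σ R) :=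
  Ideal.span ((fun d => monomial d 1) '' S)

theorem monomial_mem_monomialIdeal_of_coeff_ne_zero {S : Set (σ →₀ ℕ)} {f : MvPowerSeries σ R}
    (hf : f ∈ monomialIdeal R S) {e : σ →₀ ℕ} (he : coeff e f ≠ 0) :
    monomial e 1 ∈ monomialIdeal R S := by
  classical
  obtain ⟨c, hc, rfl⟩ := Submodule.mem_span_set.mp hf
  rw [Finsupp.sum, map_sum] at he
  obtain ⟨_, hm, hne⟩ := Finset.exists_ne_zero_of_sum_ne_zero he
  obtain ⟨d, hdS, rfl⟩ := hc hm
  rw [smul_eq_mul, coeff_mul_monomial] at hne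
  have hde : d ≤ e := by
    by_contra h
    exact hne (if_neg h)
  rw [show monomial e (1 : R) = monomial (e - d) 1 * monomial d 1 by
    rw [monomial_mul_monomial, one_mul, tsub_add_cancel_of_le hde]]
  exact Ideal.mul_mem_left _ _ (Ideal.subset_span ⟨d, hdS, rfl⟩)

end CommSemiring

theorem exists_X_pow_mem_monomialIdeal {K : Type*} [Field K] {S : Set (σ →₀ ℕ)}
    (hfin : Module.Finite K (MvPowerSeries σ K ⧸ monomialIdeal K S)) (i : σ) :
    ∃ n, X i ^ n ∈ monomialIdeal K S := by
  classical
  obtain ⟨s, g, hsum, n, hns, hgn⟩ := not_linearIndependent_iff.mp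
    (Module.Finite.not_linearIndependent_of_infinite (R := K)
      fun n : ℕ => Ideal.Quotient.mk (monomialIdeal K S) (X i ^ n))
  have hmem : ∑ m ∈ s, g m • (X i : MvPowerSeries σ K) ^ m ∈ monomialIdeal K S := by
    rw [← Ideal.Quotient.eq_zero_iff_mem, ← hsum, map_sum]
    simp only [← Ideal.Quotient.mkₐ_eq_mk K, map_smul]
  refine ⟨n, ?_⟩
  rw [X_pow_eq]
  refine monomial_mem_monomialIdeal_of_coeff_ne_zero hmem ?_
  simpa [X_pow_eq, coeff_monomial, (Finsupp.single_injective i).eq_iff, hns] using hgn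

section CommRing

variable [CommRing R]

noncomputable def substAlgEquiv {a b : σ → MvPowerSeries σ R} (ha : HasSubst a)
    (hb : HasSubst b) (hab : ∀ s, subst a (b s) = X s) (hba : ∀ s, subst b (a s) = X s) :
    MvPowerSeries σ R ≃ₐ[R] MvPowerSeries σ R :=
  AlgEquiv.ofAlgHom (substAlgHom ha) (substAlgHom hb)
    (AlgHom.ext fun f => by simp [subst_comp_subst_apply hb ha, hab, subst_self])
    (AlgHom.ext fun f => by simp [subst_comp_subst_apply ha hb, hba, subst_self])

theorem substAlgEquiv_apply {a b : σ → MvPowerSeries σ R} (ha : HasSubst a) (hb : HasSubst b)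
    (hab : ∀ s, subst a (b s) = X s) (hba : ∀ s, subst b (a s) = X s)
    (f : MvPowerSeries σ R) : substAlgEquiv ha hb hab hba f = subst a f := by
  simp [substAlgEquiv]

variable [DecidableEq σ]

noncomputable def transvection (i j : σ) (c : R) : σ → MvPowerSeries σ R :=
  Function.update X i (X i + c • X j)

theorem transvection_self (i j : σ) (c : R) : transvection i j c i = X i + c • X j := by
  simp [transvection]

theorem transvection_of_ne {i s : σ} (j : σ) (c : R) (hs : s ≠ i) :
    transvection i j c s = X s := by
  simp [transvection, hs]

theorem transvection_zero (i j : σ) : transvection i j (0 : R) = X := by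
  simp [transvection]

theorem hasSubst_transvection (i j : σ) (c : R) : HasSubst (transvection i j c) where
  const_coeff s := by
    rcases eq_or_ne s i with rfl | hs
    · simp [transvection_self]
    · simp [transvection_of_ne j c hs]
  coeff_zero d := ((HasSubst.X.coeff_zero d).insert i).subset fun s hs => by
    rcases eq_or_ne s i with rfl | h
    · exact Set.mem_insert s _
    · exact Set.mem_insert_of_mem i (by rwa [Set.mem_ofPred_eq, ← transvection_of_ne j c h])

theorem subst_transvection {i j : σ} (hij : i ≠ j) (c c' : R) (s : σ) :
    subst (transvection i j c) (transvection i j c' s) = transvection i j (c + c') s := by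
  have hX (t : σ) : subst (transvection i j c) (X t : MvPowerSeries σ R) = transvection i j c t :=
    subst_X (hasSubst_transvection i j c) t
  rcases eq_or_ne s i with rfl | hs
  · rw [transvection_self, transvection_self, subst_add (hasSubst_transvection s j c),
      subst_smul (hasSubst_transvection s j c), hX, hX, transvection_self,
      transvection_of_ne j c hij.symm, add_smul, add_assoc]
  · rw [transvection_of_ne j _ hs, transvection_of_ne j _ hs, hX, transvection_of_ne j _ hs]

noncomputable def transvectionEquiv {i j : σ} (hij : i ≠ j) (c : R) :
    MvPowerSeries σ R ≃ₐ[R] MvPowerSeries σ R :=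
  substAlgEquiv (hasSubst_transvection i j c) (hasSubst_transvection i j (-c))
    (fun s => by rw [subst_transvection hij, add_neg_cancel, transvection_zero])
    (fun s => by rw [subst_transvection hij, neg_add_cancel, transvection_zero])

theorem subst_transvection_monomial (i j : σ) (c : R) (e : σ →₀ ℕ) :
    subst (transvection i j c) (monomial e (1 : R)) =
      (X i + c • X j) ^ e i * monomial (e.erase i) 1 := by
  have ha := hasSubst_transvection i j c
  have hsplit : monomial e (1 : R) = X i ^ e i * monomial (e.erase i) 1 := by
    rw [X_pow_eq, monomial_mul_monomial, one_mul, Finsupp.single_add_erase]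
  have hfix : subst (transvection i j c) (monomial (e.erase i) (1 : R)) =
      monomial (e.erase i) 1 := by
    have hX : subst (X : σ → MvPowerSeries σ R) (monomial (e.erase i) (1 : R)) =
        monomial (e.erase i) 1 := congrFun subst_self _
    rw [subst_monomial ha, ← hX, subst_monomial HasSubst.X]
    congr 1
    refine Finsupp.prod_congr fun s hs => ?_
    rw [Finsupp.support_erase] at hs
    rw [transvection_of_ne j c (Finset.ne_of_mem_erase hs)]
  rw [hsplit, subst_mul ha, subst_pow ha, subst_X ha, transvection_self, hfix]

theorem coeff_subst_transvection_monomial {i j : σ} (hij : i ≠ j) (c : R) {e : σ →₀ ℕ} {k : ℕ}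
    (hk : k ≤ e i) :
    coeff (e.update i (e i - k) + Finsupp.single j k)
      (subst (transvection i j c) (monomial e (1 : R))) = c ^ k * (e i).choose k := by
  have hterm (m : ℕ) : (c • X j) ^ m * X i ^ (e i - m) * ((e i).choose m : MvPowerSeries σ R) *
      monomial (e.erase i) 1 = monomial (Finsupp.single j m + Finsupp.single i (e i - m) +
        e.erase i) (c ^ m * (e i).choose m) := by
    rw [smul_pow, X_pow_eq, X_pow_eq, ← map_natCast (C (σ := σ) (R := R)), smul_eq_C_mul,
      ← monomial_zero_eq_C_apply, ← monomial_zero_eq_C_apply]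
    simp only [monomial_mul_monomial, zero_add, add_zero, mul_one]
  have hexp (m : ℕ) : e.update i (e i - k) + Finsupp.single j k =
      Finsupp.single j m + Finsupp.single i (e i - m) + e.erase i ↔ m = k := by
    constructor
    · intro h
      have hj : e j + k = m + e j := by simpa [hij.symm] using DFunLike.congr_fun h j
      omega
    · rintro rfl
      ext s
      simp only [Finsupp.add_apply, Finsupp.update_apply, Finsupp.single_apply,
        Finsupp.erase_apply]
      split_ifs <;> grind
  rw [subst_transvection_monomial, add_comm (X i), add_pow, Finset.sum_mul, map_sum]
  simp only [hterm, coeff_monomial, hexp]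
  rw [Finset.sum_ite_eq', if_pos (Finset.mem_range_succ_iff.mpr hk)]

end CommRing

theorem monomial_update_add_single_mem_monomialIdeal {K : Type*} [Field K] [CharZero K]
    [DecidableEq σ] {S : Set (σ →₀ ℕ)} {i j : σ} (hij : i ≠ j) {c : K} (hc : c ≠ 0)
    (hS : Ideal.map (transvectionEquiv hij c) (monomialIdeal K S) ≤ monomialIdeal K S)
    {e : σ →₀ ℕ} (he : monomial e 1 ∈ monomialIdeal K S) {k : ℕ} (hk : k ≤ e i) :
    monomial (e.update i (e i - k) + Finsupp.single j k) 1 ∈ monomialIdeal K S := by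
  refine monomial_mem_monomialIdeal_of_coeff_ne_zero (hS (Ideal.mem_map_of_mem _ he)) ?_
  rw [transvectionEquiv, substAlgEquiv_apply, coeff_subst_transvection_monomial hij c hk]
  exact mul_ne_zero (pow_ne_zero k hc) (Nat.cast_ne_zero.mpr (Nat.choose_pos hk).ne')

theorem monomial_mem_monomialIdeal_of_degree_eq {K : Type*} [Field K] [CharZero K]
    {S : Set (Fin 2 →₀ ℕ)}
    (hS : ∀ (i j : Fin 2) (hij : i ≠ j),
      Ideal.map (transvectionEquiv hij (1 : K)) (monomialIdeal K S) ≤ monomialIdeal K S)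
    {e f : Fin 2 →₀ ℕ} (he : monomial e 1 ∈ monomialIdeal K S) (hf : f.degree = e.degree) :
    monomial f 1 ∈ monomialIdeal K S := by
  rw [Finsupp.degree_eq_sum, Finsupp.degree_eq_sum, Fin.sum_univ_two, Fin.sum_univ_two] at hf
  have hshift (i j : Fin 2) (hij : i ≠ j) (hfe : f i ≤ e i) :
      f = e.update i (e i - (e i - f i)) + Finsupp.single j (e i - f i) := by
    ext s
    fin_cases i <;> fin_cases j <;> fin_cases s <;> simp_all <;> omega
  have h01 : (0 : Fin 2) ≠ 1 := by decide
  rcases le_total (f 0) (e 0) with h0 | h1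
  · rw [hshift 0 1 h01 h0]
    exact monomial_update_add_single_mem_monomialIdeal h01 one_ne_zero (hS 0 1 h01) he
      (Nat.sub_le _ _)
  · rw [hshift 1 0 h01.symm (by omega)]
    exact monomial_update_add_single_mem_monomialIdeal h01.symm one_ne_zero (hS 1 0 h01.symm) he
      (Nat.sub_le _ _)

end MvPowerSeries

open MvPowerSeries

/-- Let `K` have characteristic zero and `R = K[[x,y]]`.  A monomial ideal
`I ⊆ R` of finite colength which is fixed by every `K`-algebra automorphism of `R` is a
power of the maximal ideal `(x,y)`. -/
theorem automorphism_invariant_monomial_ideal_eq_pow_maximalIdeal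
    (K : Type*) [Field K] [CharZero K]
    (I : Ideal (MvPowerSeries (Fin 2) K))
    (hmono : ∃ S : Set (Fin 2 →₀ ℕ),
      I = Ideal.span ((fun d => MvPowerSeries.monomial d (1 : K)) '' S))
    (hfin : Module.Finite K (MvPowerSeries (Fin 2) K ⧸ I))
    (hinv : ∀ σ : MvPowerSeries (Fin 2) K ≃ₐ[K] MvPowerSeries (Fin 2) K,
      Ideal.map σ I = I) :
    ∃ d : ℕ,
      I = (Ideal.span {MvPowerSeries.X 0, MvPowerSeries.X 1} :
        Ideal (MvPowerSeries (Fin 2) K)) ^ d := by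
  classical
  obtain ⟨S, rfl⟩ := hmono
  obtain ⟨n, hn⟩ := exists_X_pow_mem_monomialIdeal hfin 0
  have hex : ∃ d, ∃ e : Fin 2 →₀ ℕ, e.degree = d ∧ monomial e 1 ∈ monomialIdeal K S :=
    ⟨n, Finsupp.single 0 n, Finsupp.degree_single 0 n, by rwa [← X_pow_eq]⟩
  obtain ⟨e, he, heI⟩ := Nat.find_spec hex
  have hrange : {X 0, X 1} = Set.range (X : Fin 2 → MvPowerSeries (Fin 2) K) := by
    ext
    simp [Fin.exists_fin_two, eq_comm]
  refine ⟨Nat.find hex, le_antisymm ?_ ?_⟩ <;> rw [hrange]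
  · rw [Ideal.span_le]
    rintro _ ⟨f, hf, rfl⟩
    exact Ideal.pow_le_pow_right (Nat.find_min' hex ⟨f, rfl, Ideal.subset_span ⟨f, hf, rfl⟩⟩)
      (monomial_one_mem_span_range_X_pow f)
  · exact span_range_X_pow_le fun f hf =>
      monomial_mem_monomialIdeal_of_degree_eq (fun i j hij => (hinv _).le) heI (hf.trans he.symm)
end

section
/- Let K be a field, let R = K[[x,y]], and let σ be a K-algebra automorphism of R such that σ maps the ideal (x, y^2) onto itself. Then for every positive integer m one has the containments (x, y^2)^{2m} ⊆ σ((x, y^4)^m) ⊆ (x, y^2)^m. That is, every ideal in the orbit of (x,y^4)^m under the group of automorphisms fixing (x,y^2) is sandwiched between (x,y^2)^{2m} and (x,y^2)^m. -/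
/-- Let `R = K[[x,y]]` and let `σ` be a `K`-algebra automorphism of `R`
mapping the ideal `(x, y²)` onto itself.  Then for every `m ≥ 1`,
`(x, y²)^{2m} ⊆ σ((x, y⁴)^m) ⊆ (x, y²)^m`. -/
theorem orbit_ideal_sandwiched
    (K : Type*) [Field K]
    (σ : MvPowerSeries (Fin 2) K ≃ₐ[K] MvPowerSeries (Fin 2) K)
    (hσ : Ideal.map σ
        (Ideal.span {MvPowerSeries.X 0, MvPowerSeries.X 1 ^ 2} :
          Ideal (MvPowerSeries (Fin 2) K))
      = Ideal.span {MvPowerSeries.X 0, MvPowerSeries.X 1 ^ 2})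
    (m : ℕ) (hm : 1 ≤ m) :
    (Ideal.span {MvPowerSeries.X 0, MvPowerSeries.X 1 ^ 2} :
        Ideal (MvPowerSeries (Fin 2) K)) ^ (2 * m)
      ≤ Ideal.map σ
          ((Ideal.span {MvPowerSeries.X 0, MvPowerSeries.X 1 ^ 4} :
            Ideal (MvPowerSeries (Fin 2) K)) ^ m) ∧
    Ideal.map σ
        ((Ideal.span {MvPowerSeries.X 0, MvPowerSeries.X 1 ^ 4} :
          Ideal (MvPowerSeries (Fin 2) K)) ^ m)
      ≤ (Ideal.span {MvPowerSeries.X 0, MvPowerSeries.X 1 ^ 2} :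
          Ideal (MvPowerSeries (Fin 2) K)) ^ m := by
  set R := MvPowerSeries (Fin 2) K
  set x : R := MvPowerSeries.X 0
  set y : R := MvPowerSeries.X 1
  set I : Ideal R := Ideal.span {x, y ^ 2} with hI
  set J : Ideal R := Ideal.span {x, y ^ 4} with hJ
  have hJI : J ≤ I := by
    rw [hJ, Ideal.span_le]
    rintro z (rfl | rfl)
    · exact Ideal.subset_span (Set.mem_insert _ _)
    · have : y ^ 4 = y ^ 2 * y ^ 2 := by ring
      rw [this]
      exact Ideal.mul_mem_right _ _
        (Ideal.subset_span (Set.mem_insert_of_mem _ rfl))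
  have hxJ : x ∈ J := Ideal.subset_span (Set.mem_insert _ _)
  have hy4J : y ^ 4 ∈ J := Ideal.subset_span (Set.mem_insert_of_mem _ rfl)
  have hI2J : I ^ 2 ≤ J := by
    rw [pow_two, hI]
    refine Ideal.mul_le.2 ?_
    intro r hr s hs
    rw [Ideal.mem_span_pair] at hr hs
    obtain ⟨a, b, rfl⟩ := hr
    obtain ⟨c, d, rfl⟩ := hs
    have : (a * x + b * y ^ 2) * (c * x + d * y ^ 2)
        = (a * (c * x + d * y ^ 2) + b * c * y ^ 2) * x + b * d * y ^ 4 := by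
      ring
    rw [this]
    exact J.add_mem (Ideal.mul_mem_left _ _ hxJ) (Ideal.mul_mem_left _ _ hy4J)
  have key : I ^ (2 * m) ≤ J ^ m := by
    rw [pow_mul]
    exact Ideal.pow_right_mono hI2J m
  constructor
  · calc I ^ (2 * m) = Ideal.map σ (I ^ (2 * m)) := by
          rw [Ideal.map_pow, hσ]
      _ ≤ Ideal.map σ (J ^ m) := Ideal.map_mono key
  · calc Ideal.map σ (J ^ m) ≤ Ideal.map σ (I ^ m) :=
          Ideal.map_mono (Ideal.pow_right_mono hJI m)
      _ = I ^ m := by rw [Ideal.map_pow, hσ]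
end
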